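/- arXiv:2006.04567 — 2 statements merged into one kernel-verified Lean document; each statement's English description precedes it below -/
import Mathlib

section
/- Let q be a prime power, α a primitive element (generator of the multiplicative group) of F_q, and let D_q be the linear code over F_q of length q(q+1)/2 and dimension 2 generated by the two rows of the matrix whose columns consist of, for each i = 1, …, q−1, exactly i copies of the column (1, α^i)^T, together with q copies of the column (1, 0)^T. Then D_q is a [q(q+1)/2, 2, q(q−1)/2]_q code with S(D_q) = {q(q−1)/2, q(q−1)/2 + 1, …, q(q+1)/2}; in particular D_q is a strictly compact MWS code. -/
/-!
Since `α` is primitive, `i ↦ α ^ i` is a bijection from `{1, …, q - 1}` onto `Fˣ`, so the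
prescribed columns `(1, α ^ i)` (`i` copies each) and `(1, 0)` (`q` copies) are pairwise
distinct and already number `q(q - 1)/2 + q = n`: there are no other columns. Hence `D` is
spanned by the all-ones word and the word `v` of second coordinates, in which `0` occurs `q`
times and the nonzero values occur `1, …, q - 1` times. A codeword `a • 1 + b • v` with
`b ≠ 0` vanishes exactly where `v = -a/b`, so its weight `n - #{j | v j = -a/b}` runs through
`n - q, …, n - 1`, while the nonzero multiples of `1` have weight `n`.
-/

open scoped Classical
open Finset

/-- `qk q k = (q^k - 1)/(q - 1)`, the number of nonzero weights an MWS code of dimension `k`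
over a field with `q` elements has. -/
def qk (q k : ℕ) : ℕ := (q ^ k - 1) / (q - 1)

/-- The set of nonzero Hamming weights of a linear code `C ⊆ F^n`. -/
noncomputable def weightSet {F : Type*} [Field F] [Fintype F] {n : ℕ}
    (C : Submodule F (Fin n → F)) : Finset ℕ :=
  Finset.image (fun c => hammingNorm c)
    (Finset.univ.filter fun c : Fin n → F => c ∈ C ∧ c ≠ 0)

/-- A code is non-degenerate if no coordinate is identically zero. -/
def Nondeg {F : Type*} [Field F] {n : ℕ} (C : Submodule F (Fin n → F)) : Prop :=
  ∀ i : Fin n, ∃ c ∈ C, c i ≠ 0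

/-- Maximum weight spectrum code of dimension `k`. -/
def IsMWS {F : Type*} [Field F] [Fintype F] {n : ℕ}
    (C : Submodule F (Fin n → F)) (k : ℕ) : Prop :=
  (weightSet C).card = qk (Fintype.card F) k

/-- The spread of an MWS code. -/
noncomputable def spread {F : Type*} [Field F] [Fintype F] {n : ℕ}
    (C : Submodule F (Fin n → F)) (k : ℕ) : ℤ :=
  (n : ℤ) * qk (Fintype.card F) k
    - ((qk (Fintype.card F) k * (qk (Fintype.card F) k - 1)) / 2 : ℕ)
    - ∑ w ∈ weightSet C, (w : ℤ)

/-- A compact MWS code: the weight set is an interval of `q_k` consecutive integers starting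
at the minimum distance. -/
def IsCompactMWS {F : Type*} [Field F] [Fintype F] {n : ℕ}
    (C : Submodule F (Fin n → F)) (k : ℕ) : Prop :=
  IsMWS C k ∧ ∃ d, d ∈ weightSet C ∧
    weightSet C = Finset.Icc d (d + qk (Fintype.card F) k - 1)

/-- A strictly compact MWS code: a compact MWS code whose length is itself a weight. -/
def IsStrictlyCompactMWS {F : Type*} [Field F] [Fintype F] {n : ℕ}
    (C : Submodule F (Fin n → F)) (k : ℕ) : Prop :=
  IsCompactMWS C k ∧ n ∈ weightSet C


theorem Finset.sum_Icc_one_id (m : ℕ) : ∑ i ∈ Icc 1 m, i = (m + 1) * m / 2 := by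
  calc ∑ i ∈ Icc 1 m, i = ∑ i ∈ range (m + 1), i := by
        rw [range_eq_Ico, sum_eq_sum_Ico_succ_bot (Nat.succ_pos m)]
        simp [Ico_add_one_right_eq_Icc]
    _ = (m + 1) * m / 2 := by rw [sum_range_id, Nat.add_sub_cancel]

theorem Nat.mul_pred_div_two_add_self (q : ℕ) : q * (q - 1) / 2 + q = q * (q + 1) / 2 := by
  rw [← Nat.triangle_succ, Nat.add_sub_cancel, Nat.mul_comm]

section PrimitiveElement

variable {F : Type*} [Field F] [Fintype F] {α : F}

theorem image_pow_Icc_eq_compl_zero (hα : orderOf α = Fintype.card F - 1) :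
    (Icc 1 (Fintype.card F - 1)).image (α ^ ·) = {0}ᶜ := by
  have hq : 1 < Fintype.card F := Fintype.one_lt_card
  have : NeZero (Fintype.card F - 1) := ⟨by omega⟩
  have hprim : IsPrimitiveRoot α (Fintype.card F - 1) := hα ▸ IsPrimitiveRoot.orderOf α
  refine subset_antisymm (fun y hy => ?_) (fun y hy => ?_)
  · obtain ⟨i, -, rfl⟩ := mem_image.1 hy
    simpa using pow_ne_zero i (hprim.ne_zero (NeZero.ne _))
  · obtain ⟨i, hi, rfl⟩ := hprim.eq_pow_of_pow_eq_one
      (FiniteField.pow_card_sub_one_eq_one y (by simpa using hy))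
    rcases i.eq_zero_or_pos with rfl | hi0
    · exact mem_image.2
        ⟨Fintype.card F - 1, mem_Icc.2 ⟨by omega, le_rfl⟩, by simp [hprim.pow_eq_one]⟩
    · exact mem_image_of_mem _ (mem_Icc.2 ⟨hi0, hi.le⟩)

theorem injOn_pow_Icc (hα : orderOf α = Fintype.card F - 1) :
    Set.InjOn (α ^ ·) (Icc 1 (Fintype.card F - 1) : Finset ℕ) := by
  have hq : 1 < Fintype.card F := Fintype.one_lt_card
  rw [← card_image_iff, image_pow_Icc_eq_compl_zero hα, card_compl, card_singleton,
    Nat.card_Icc]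
  omega

end PrimitiveElement

section OnesAndVector

variable {F : Type*} [Field F] {ι : Type*}

theorem hammingNorm_sub_const [Fintype ι] (v : ι → F) (y : F) :
    hammingNorm (v - fun _ => y) = Fintype.card ι - #{j | v j = y} := by
  simp [hammingNorm, sub_eq_zero, filter_not, card_sdiff]

theorem hammingNorm_smul_one_add_smul [Fintype ι] (a : F) {b : F} (hb : b ≠ 0) (v : ι → F) :
    hammingNorm (a • (1 : ι → F) + b • v) = Fintype.card ι - #{j | v j = -a / b} := by
  have h : a • (1 : ι → F) + b • v = b • (v - fun _ => -a / b) := by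
    ext j
    simp only [Pi.add_apply, Pi.smul_apply, Pi.sub_apply, Pi.one_apply, smul_eq_mul]
    field_simp
    ring
  rw [h, hammingNorm_smul (fun _ => IsSMulRegular.of_ne_zero hb), hammingNorm_sub_const]

theorem finrank_span_one_pair [Fintype ι] {v : ι → F} {i j : ι} (hij : v i ≠ v j) :
    Module.finrank F (Submodule.span F {(1 : ι → F), v}) = 2 := by
  have hli : LinearIndependent F ![(1 : ι → F), v] := by
    refine LinearIndependent.pair_iff.2 fun s t hst => ?_
    have hi := congrFun hst i
    have hj := congrFun hst j
    simp only [Pi.add_apply, Pi.smul_apply, Pi.one_apply, smul_eq_mul, Pi.zero_apply] at hi hj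
    have ht : t = 0 := by
      have : t * (v i - v j) = 0 := by linear_combination hi - hj
      simpa [sub_eq_zero, hij] using this
    subst ht
    simpa using hi
  rw [← Fintype.card_fin 2, ← finrank_span_eq_card hli, Matrix.range_cons, Matrix.range_cons,
    Matrix.range_empty, Set.union_empty, Set.singleton_union]

theorem weightSet_eq_image_erase_zero [Fintype F] {n : ℕ} (C : Submodule F (Fin n → F)) :
    weightSet C = ((univ.filter (· ∈ C)).image hammingNorm).erase 0 := by
  ext w
  simp only [weightSet, mem_erase, mem_image, mem_filter, mem_univ, true_and]
  constructor
  · rintro ⟨c, ⟨hc, hc0⟩, rfl⟩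
    exact ⟨hammingNorm_ne_zero_iff.2 hc0, c, hc, rfl⟩
  · rintro ⟨hw, c, hc, rfl⟩
    exact ⟨c, ⟨hc, hammingNorm_ne_zero_iff.1 hw⟩, rfl⟩

theorem weightSet_span_one_pair [Fintype F] {n : ℕ} (v : Fin n → F) :
    weightSet (Submodule.span F {1, v}) =
      (insert n (univ.image fun y => n - #{j | v j = y})).erase 0 := by
  rw [weightSet_eq_image_erase_zero]
  ext w
  simp only [mem_erase, mem_image, mem_filter, mem_univ, true_and, Submodule.mem_span_pair,
    mem_insert]
  refine and_congr_right fun hw => ⟨?_, ?_⟩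
  · rintro ⟨_, ⟨a, b, rfl⟩, rfl⟩
    by_cases hb : b = 0
    · have ha : a ≠ 0 := by rintro rfl; simp [hb] at hw
      left
      simp [hb, ha, hammingNorm]
    · exact Or.inr ⟨-a / b, by rw [hammingNorm_smul_one_add_smul a hb, Fintype.card_fin]⟩
  · rintro (rfl | ⟨y, rfl⟩)
    · exact ⟨1, ⟨1, 0, by simp⟩, by simp [hammingNorm]⟩
    · refine ⟨_, ⟨-y, 1, rfl⟩, ?_⟩
      rw [hammingNorm_smul_one_add_smul _ one_ne_zero, Fintype.card_fin]
      simp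

theorem weightSet_span_one_pair_eq_Icc [Fintype F] {n q : ℕ} {v : Fin n → F}
    (hv : univ.image (fun y => #{j | v j = y}) = Icc 1 q) (hqn : q < n) :
    weightSet (Submodule.span F {1, v}) = Icc (n - q) n := by
  have himage : univ.image (fun y => n - #{j | v j = y}) = (Icc 1 q).image (n - ·) := by
    rw [← hv, image_image]
    rfl
  rw [weightSet_span_one_pair, himage]
  ext w
  simp only [mem_erase, mem_insert, mem_image, mem_Icc]
  constructor
  · rintro ⟨hw, rfl | ⟨k, ⟨hk1, hkq⟩, rfl⟩⟩ <;> omega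
  · rintro ⟨hlo, hhi⟩
    refine ⟨by omega, ?_⟩
    rcases hhi.eq_or_lt with rfl | hlt
    · exact Or.inl rfl
    · exact Or.inr ⟨n - w, ⟨by omega, by omega⟩, by omega⟩

end OnesAndVector

theorem qk_two {q : ℕ} (hq : 2 ≤ q) : qk q 2 = q + 1 := by
  rw [qk, ← one_pow 2, Nat.sq_sub_sq, one_pow, Nat.mul_div_cancel _ (by omega)]

theorem isStrictlyCompactMWS_of_weightSet_eq_Icc {F : Type*} [Field F] [Fintype F] {n k d : ℕ}
    {C : Submodule F (Fin n → F)} (h : weightSet C = Icc d n) (hdn : d ≤ n)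
    (hk : d + qk (Fintype.card F) k = n + 1) : IsStrictlyCompactMWS C k := by
  refine ⟨⟨?_, d, ?_, ?_⟩, ?_⟩
  · rw [IsMWS, h, Nat.card_Icc]
    omega
  · simpa [h] using hdn
  · rw [h, show d + qk (Fintype.card F) k - 1 = n by omega]
  · simpa [h] using hdn

section Columns

variable {F : Type*} [Field F] [Fintype F] {ι : Type*} [Fintype ι]

/-- The column multiplicities of the generator matrix of `D_q`. -/
structure HasDqColumns (α : F) (col : ι → F × F) : Prop where
  card_pow : ∀ i : ℕ, 1 ≤ i → i ≤ Fintype.card F - 1 → #{j | col j = (1, α ^ i)} = i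
  card_zero : #{j | col j = (1, 0)} = Fintype.card F

variable {α : F} {col : ι → F × F}

theorem HasDqColumns.sum_card_fiber_mk_one (hα : orderOf α = Fintype.card F - 1)
    (hcol : HasDqColumns α col) :
    ∑ y, #{j | col j = (1, y)} = Fintype.card F * (Fintype.card F + 1) / 2 := by
  have hq : 1 ≤ Fintype.card F := Fintype.card_pos
  rw [← sum_add_sum_compl {0}, sum_singleton, hcol.card_zero, ← image_pow_Icc_eq_compl_zero hα,
    sum_image (injOn_pow_Icc hα),
    sum_congr rfl fun i hi => hcol.card_pow i (mem_Icc.1 hi).1 (mem_Icc.1 hi).2,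
    sum_Icc_one_id, Nat.sub_add_cancel hq, Nat.add_comm (Fintype.card F),
    Nat.mul_pred_div_two_add_self]

theorem HasDqColumns.fst_eq_one (hα : orderOf α = Fintype.card F - 1)
    (hcol : HasDqColumns α col)
    (hcard : Fintype.card ι = Fintype.card F * (Fintype.card F + 1) / 2) (j : ι) :
    (col j).1 = 1 := by
  have hall : #{k | col k ∈ (univ : Finset F).image (Prod.mk 1)} = #(univ : Finset ι) := by
    rw [← sum_card_fiberwise_eq_card_filter, sum_image (Prod.mk_right_injective (1 : F)).injOn,
      hcol.sum_card_fiber_mk_one hα, card_univ, hcard]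
  obtain ⟨y, -, hy⟩ := mem_image.1 (card_filter_eq_iff.1 hall j (mem_univ j))
  rw [← hy]

theorem HasDqColumns.image_card_fiber_mk_one (hα : orderOf α = Fintype.card F - 1)
    (hcol : HasDqColumns α col) :
    univ.image (fun y => #{j | col j = (1, y)}) = Icc 1 (Fintype.card F) := by
  have hq : 1 ≤ Fintype.card F := Fintype.card_pos
  rw [← insert_compl_self (0 : F), image_insert, hcol.card_zero,
    ← image_pow_Icc_eq_compl_zero hα, image_image, Function.comp_def,
    image_congr (g := id) fun i hi => hcol.card_pow i (mem_Icc.1 hi).1 (mem_Icc.1 hi).2,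
    image_id]
  ext m
  simp only [mem_insert, mem_Icc]
  omega

theorem HasDqColumns.exists_eq_mk_one (hα : orderOf α = Fintype.card F - 1)
    (hcol : HasDqColumns α col) (y : F) : ∃ j, col j = (1, y) := by
  have hy : #{j | col j = (1, y)} ∈ Icc 1 (Fintype.card F) :=
    hcol.image_card_fiber_mk_one hα ▸ mem_image_of_mem _ (mem_univ y)
  obtain ⟨j, hj⟩ := card_pos.1 (mem_Icc.1 hy).1
  exact ⟨j, (mem_filter.1 hj).2⟩

end Columns

/-- Let $q$ be a prime power, $α$ a primitive element of $F_q$, and $D_q$ the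
code of length $q(q+1)/2$ generated by the two rows of the matrix whose columns are, for
each $i = 1,\dots,q-1$, exactly $i$ copies of $(1, α^i)^T$, together with $q$ copies of
$(1,0)^T$. Then $D_q$ is a $[q(q+1)/2, 2, q(q-1)/2]_q$ code with
$S(D_q) = \{q(q-1)/2, \dots, q(q+1)/2\}$; in particular $D_q$ is a strictly compact MWS code. -/
theorem stmt_2 {F : Type*} [Field F] [Fintype F] (α : F)
    (hα : orderOf α = Fintype.card F - 1)
    (col : Fin (Fintype.card F * (Fintype.card F + 1) / 2) → F × F)
    (hcol : ∀ i : ℕ, 1 ≤ i → i ≤ Fintype.card F - 1 →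
      (Finset.univ.filter fun j => col j = (1, α ^ i)).card = i)
    (hcol0 : (Finset.univ.filter fun j => col j = ((1 : F), (0 : F))).card = Fintype.card F)
    (D : Submodule F (Fin (Fintype.card F * (Fintype.card F + 1) / 2) → F))
    (hD : D = Submodule.span F {fun j => (col j).1, fun j => (col j).2}) :
    Module.finrank F D = 2 ∧
    weightSet D = Finset.Icc (Fintype.card F * (Fintype.card F - 1) / 2)
      (Fintype.card F * (Fintype.card F + 1) / 2) ∧
    (∀ w ∈ weightSet D, Fintype.card F * (Fintype.card F - 1) / 2 ≤ w) ∧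
    IsStrictlyCompactMWS D 2 := by
  have hq : 2 ≤ Fintype.card F := Fintype.one_lt_card
  have hcols : HasDqColumns α col := ⟨hcol, hcol0⟩
  have hfst : (fun j => (col j).1) = 1 := funext (hcols.fst_eq_one hα (Fintype.card_fin _))
  rw [hfst] at hD
  have hsnd : univ.image (fun y => #{j | (col j).2 = y}) = Icc 1 (Fintype.card F) := by
    simp only [← hcols.image_card_fiber_mk_one hα, Prod.ext_iff, congrFun hfst, Pi.one_apply,
      true_and]
  have htri := Nat.mul_pred_div_two_add_self (Fintype.card F)
  have hpos : 0 < Fintype.card F * (Fintype.card F - 1) / 2 :=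
    Nat.div_pos (Nat.mul_le_mul hq (by omega : 1 ≤ Fintype.card F - 1)) two_pos
  have hws : weightSet D = Icc (Fintype.card F * (Fintype.card F - 1) / 2)
      (Fintype.card F * (Fintype.card F + 1) / 2) := by
    rw [hD, weightSet_span_one_pair_eq_Icc hsnd (by omega)]
    congr 1
    omega
  obtain ⟨j₀, hj₀⟩ := hcols.exists_eq_mk_one hα 0
  obtain ⟨j₁, hj₁⟩ := hcols.exists_eq_mk_one hα 1
  refine ⟨hD ▸ finrank_span_one_pair (i := j₀) (j := j₁) (by simp [hj₀, hj₁]), hws,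
    fun w hw => (mem_Icc.1 (hws ▸ hw)).1, isStrictlyCompactMWS_of_weightSet_eq_Icc hws ?_ ?_⟩
  · omega
  · rw [qk_two hq]
    omega
end

section
/- Let C be a non-degenerate [n,k]_q MWS code and suppose q·k is even. Then q_{k−1} divides Δ(C); that is, Δ(C) = h·q_{k−1} for some non-negative integer h. -/
open scoped Classical
open Finset

/-!
Multiplying a codeword by one of the `q - 1` nonzero scalars preserves its weight, so every weight
is taken by at least `q - 1` nonzero codewords. There are `q^k - 1 = (q - 1) q_k` nonzero codewords
and, for an MWS code, `q_k` weights, so every weight is taken exactly `q - 1` times. Counting the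
nonzero entries coordinate by coordinate (by non-degeneracy each coordinate functional is onto, so
it is nonzero on `(q - 1) q^{k-1}` codewords) then gives `Σ w = n q^{k-1}`. Since
`q_k = q^{k-1} + q_{k-1}` and `q_k - 1 = q q_{k-1}`, the spread equals `(n - q q_k / 2) q_{k-1}`,
where `q q_k` is even as soon as `q k` is. Finally the spread is non-negative because `q_k`
distinct weights in `[1, n]` add up to at most `n q_k - q_k (q_k - 1) / 2`.
-/

section GeometricSum

variable {q : ℕ}

lemma qk_eq_sum_range (hq : 2 ≤ q) (k : ℕ) : qk q k = ∑ i ∈ range k, q ^ i :=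
  (Nat.geomSum_eq hq k).symm

lemma qk_zero : qk q 0 = 0 := by simp [qk]

lemma qk_succ (hq : 2 ≤ q) (k : ℕ) : qk q (k + 1) = q * qk q k + 1 := by
  simp only [qk_eq_sum_range hq, geom_sum_succ]

lemma qk_succ' (hq : 2 ≤ q) (k : ℕ) : qk q (k + 1) = q ^ k + qk q k := by
  simp only [qk_eq_sum_range hq, geom_sum_succ']

lemma sub_one_mul_qk (k : ℕ) : (q - 1) * qk q k = q ^ k - 1 :=
  Nat.mul_div_cancel' (Nat.sub_one_dvd_pow_sub_one q k)

lemma even_mul_qk {k : ℕ} (hq : 2 ≤ q) (h : Even (q * k)) : Even (q * qk q k) := by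
  rcases Nat.even_mul.mp h with hq_even | hk
  · exact hq_even.mul_right _
  rcases Nat.even_or_odd q with hq_even | hq_odd
  · exact hq_even.mul_right _
  refine Even.mul_left ?_ q
  rw [qk_eq_sum_range hq, even_sum_iff_even_card_odd,
    filter_true_of_mem fun i _ => hq_odd.pow, card_range]
  exact hk

end GeometricSum

namespace Finset

variable {α β : Type*} [DecidableEq β]

lemma card_fiber_eq_of_le_of_card_le {s : Finset α} {f : α → β} {d : ℕ}
    (hle : ∀ b ∈ s.image f, d ≤ #{a ∈ s | f a = b}) (hcard : #s ≤ d * #(s.image f)) :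
    ∀ b ∈ s.image f, #{a ∈ s | f a = b} = d := by
  have hsum : ∑ b ∈ s.image f, d = ∑ b ∈ s.image f, #{a ∈ s | f a = b} := by
    refine le_antisymm (sum_le_sum hle) ?_
    rw [← card_eq_sum_card_image, sum_const, smul_eq_mul, mul_comm]
    exact hcard
  exact fun b hb => ((sum_eq_sum_iff_of_le hle).mp hsum b hb).symm

lemma sum_eq_mul_sum_image_of_card_fiber_eq {s : Finset α} {f : α → ℕ} {d : ℕ}
    (hfiber : ∀ b ∈ s.image f, #{a ∈ s | f a = b} = d) :
    ∑ a ∈ s, f a = d * ∑ b ∈ s.image f, b := by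
  rw [sum_comp (fun b => b) f, mul_sum]
  exact sum_congr rfl fun b hb => by rw [hfiber b hb, smul_eq_mul]

end Finset

lemma Int.exists_nat_mul_eq_of_nonneg_of_dvd {x : ℤ} {d : ℕ} (hx : 0 ≤ x) (hd : (d : ℤ) ∣ x) :
    ∃ h : ℕ, x = h * d := by
  obtain ⟨t, rfl⟩ := hd
  rcases Nat.eq_zero_or_pos d with rfl | hd_pos
  · exact ⟨0, by simp⟩
  · refine ⟨t.toNat, ?_⟩
    rw [Int.toNat_of_nonneg (nonneg_of_mul_nonneg_right hx (by exact_mod_cast hd_pos)), mul_comm]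

lemma LinearMap.card_apply_ne_zero {F V : Type*} [Field F] [Fintype F] [AddCommGroup V]
    [Module F V] [Fintype V] {φ : V →ₗ[F] F} (hφ : Function.Surjective φ) :
    Fintype.card {v // φ v ≠ 0} =
      (Fintype.card F - 1) * Fintype.card F ^ (Module.finrank F V - 1) := by
  have hrank := φ.finrank_range_add_finrank_ker
  rw [LinearMap.range_eq_top.mpr hφ, finrank_top, Module.finrank_self] at hrank
  have hker : Fintype.card {v // φ v = 0} = Fintype.card F ^ (Module.finrank F V - 1) := by
    rw [← hrank, Nat.add_sub_cancel_left, ← Module.card_eq_pow_finrank]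
    exact Fintype.card_congr (Equiv.refl _)
  rw [Fintype.card_subtype_compl, hker, Module.card_eq_pow_finrank (K := F), ← hrank,
    Nat.add_sub_cancel_left, pow_add, pow_one, Nat.sub_one_mul]

section LinearCode

variable {F : Type*} [Field F] [Fintype F] {n : ℕ} (C : Submodule F (Fin n → F))

noncomputable def nonzeroCodewords : Finset (Fin n → F) := univ.filter fun c => c ∈ C ∧ c ≠ 0

lemma weightSet_eq_image : weightSet C = (nonzeroCodewords C).image hammingNorm := rfl

lemma card_nonzeroCodewords :
    #(nonzeroCodewords C) = Fintype.card F ^ Module.finrank F C - 1 := by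
  rw [nonzeroCodewords, ← filter_filter, filter_ne', card_erase_of_mem (by simp [C.zero_mem]),
    ← Module.card_eq_pow_finrank (V := C)]
  exact congrArg (· - 1) (Fintype.card_subtype (· ∈ C)).symm

lemma card_filter_apply_ne_zero {i : Fin n} (hi : ∃ c ∈ C, c i ≠ 0) :
    #{c : Fin n → F | c ∈ C ∧ c i ≠ 0} =
      (Fintype.card F - 1) * Fintype.card F ^ (Module.finrank F C - 1) := by
  set φ : C →ₗ[F] F := LinearMap.proj i ∘ₗ C.subtype
  have hφ : Function.Surjective φ := by
    obtain ⟨c, hcC, hci⟩ := hi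
    intro a
    refine ⟨(a * (c i)⁻¹) • ⟨c, hcC⟩, ?_⟩
    simp [φ, hci]
  rw [← LinearMap.card_apply_ne_zero hφ, ← Fintype.card_subtype]
  exact Fintype.card_congr (Equiv.subtypeSubtypeEquivSubtypeInter _ _).symm

lemma sum_hammingNorm_nonzeroCodewords (hC : Nondeg C) :
    ∑ c ∈ nonzeroCodewords C, hammingNorm c
      = n * ((Fintype.card F - 1) * Fintype.card F ^ (Module.finrank F C - 1)) := by
  have hcount (i : Fin n) : #{c ∈ nonzeroCodewords C | c i ≠ 0}
      = (Fintype.card F - 1) * Fintype.card F ^ (Module.finrank F C - 1) := by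
    rw [← card_filter_apply_ne_zero C (hC i), nonzeroCodewords, filter_filter]
    congr 1
    ext c
    simp only [mem_filter, mem_univ, true_and]
    exact ⟨fun h => ⟨h.1.1, h.2⟩, fun h => ⟨⟨h.1, ne_of_apply_ne (· i) h.2⟩, h.2⟩⟩
  simp_rw [hammingNorm, card_eq_sum_ones, sum_filter]
  rw [sum_comm]
  simp_rw [← sum_filter, ← card_eq_sum_ones, hcount, sum_const, card_univ, Fintype.card_fin,
    smul_eq_mul]

lemma sub_one_le_card_weight_fiber {w : ℕ} (hw : w ∈ weightSet C) :
    Fintype.card F - 1 ≤ #{c ∈ nonzeroCodewords C | hammingNorm c = w} := by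
  obtain ⟨c, hc, rfl⟩ := mem_image.mp hw
  have hc' : c ∈ C ∧ c ≠ 0 := (mem_filter.mp hc).2
  calc Fintype.card F - 1 = #{α : F | α ≠ 0} := by
        rw [filter_ne', card_erase_of_mem (mem_univ 0), card_univ]
    _ ≤ _ := by
      refine card_le_card_of_injOn (· • c) (fun α hα => ?_)
        fun α _ β _ h => smul_left_injective F hc'.2 h
      simp only [coe_filter, mem_univ, true_and, nonzeroCodewords, mem_filter] at hα ⊢
      exact ⟨⟨C.smul_mem α hc'.1, smul_ne_zero hα hc'.2⟩,
        hammingNorm_smul (fun _ => IsSMulRegular.of_ne_zero hα) c⟩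

lemma card_weight_fiber (hMWS : IsMWS C (Module.finrank F C)) :
    ∀ w ∈ weightSet C, #{c ∈ nonzeroCodewords C | hammingNorm c = w} = Fintype.card F - 1 := by
  refine card_fiber_eq_of_le_of_card_le (s := nonzeroCodewords C) (f := hammingNorm)
    (fun w hw => sub_one_le_card_weight_fiber C hw) ?_
  rw [← weightSet_eq_image, hMWS, sub_one_mul_qk, card_nonzeroCodewords]

lemma sum_weightSet (hC : Nondeg C) (hMWS : IsMWS C (Module.finrank F C)) :
    ∑ w ∈ weightSet C, w = n * Fintype.card F ^ (Module.finrank F C - 1) := by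
  have hq : 0 < Fintype.card F - 1 := Nat.sub_pos_of_lt Fintype.one_lt_card
  refine Nat.eq_of_mul_eq_mul_left hq ?_
  rw [weightSet_eq_image, ← sum_eq_mul_sum_image_of_card_fiber_eq (s := nonzeroCodewords C)
    (f := hammingNorm) (card_weight_fiber C hMWS), sum_hammingNorm_nonzeroCodewords C hC,
    mul_left_comm]

lemma spread_nonneg {k : ℕ} (hMWS : IsMWS C k) : 0 ≤ spread C k := by
  have hle : ∀ x ∈ (weightSet C).map Nat.castEmbedding, x ≤ (n : ℤ) := by
    simp only [mem_map, Nat.castEmbedding_apply, forall_exists_index, and_imp]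
    rintro _ w hw rfl
    obtain ⟨c, -, rfl⟩ := mem_image.mp hw
    exact_mod_cast (hammingNorm_le_card_fintype.trans_eq (Fintype.card_fin n))
  have hbound := sum_le_sum_range hle
  rw [sum_map, card_map, hMWS, sum_sub_distrib, sum_const, card_range, nsmul_eq_mul,
    ← Nat.cast_sum, sum_range_id] at hbound
  simp only [Nat.castEmbedding_apply] at hbound
  rw [spread]
  linarith

lemma spread_succ_eq {k : ℕ} (heven : Even (Fintype.card F * qk (Fintype.card F) (k + 1)))
    (hsum : ∑ w ∈ weightSet C, w = n * Fintype.card F ^ k) :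
    spread C (k + 1) = ((n : ℤ) - (Fintype.card F * qk (Fintype.card F) (k + 1) / 2 : ℕ)) *
      qk (Fintype.card F) k := by
  rw [spread]
  set q := Fintype.card F
  have hq : 2 ≤ q := Fintype.one_lt_card
  obtain ⟨m, hm⟩ := even_iff_two_dvd.mp heven
  have hpairs : qk q (k + 1) * (qk q (k + 1) - 1) / 2 = m * qk q k := by
    rw [qk_succ hq k, Nat.add_sub_cancel, ← mul_assoc, mul_comm _ q, ← qk_succ hq, hm,
      mul_assoc, Nat.mul_div_cancel_left _ two_pos]
  rw [hpairs, ← Nat.cast_sum, hsum, hm, Nat.mul_div_cancel_left _ two_pos, qk_succ' hq]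
  push_cast
  ring

end LinearCode

/-- If $q·k$ is even, then the spread of a non-degenerate $[n,k]_q$ MWS code
is a non-negative multiple of $q_{k-1}$. -/
theorem stmt_7 {F : Type*} [Field F] [Fintype F] {n k : ℕ}
    (heven : Even (Fintype.card F * k))
    (C : Submodule F (Fin n → F))
    (hdim : Module.finrank F C = k)
    (hnd : Nondeg C)
    (hMWS : IsMWS C k) :
    ∃ h : ℕ, spread C k = (h : ℤ) * qk (Fintype.card F) (k - 1) := by
  refine Int.exists_nat_mul_eq_of_nonneg_of_dvd (spread_nonneg C hMWS) ?_
  obtain _ | k := k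
  · have hS : weightSet C = ∅ := card_eq_zero.mp (hMWS.trans qk_zero)
    simp [spread, hS, qk_zero]
  · have hsum := sum_weightSet C hnd (hdim ▸ hMWS)
    rw [hdim, Nat.add_sub_cancel] at hsum
    rw [spread_succ_eq C (even_mul_qk Fintype.one_lt_card heven) hsum]
    exact dvd_mul_left _ _
end
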